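/- arXiv:2012.00734 — 2 statements merged into one kernel-verified Lean document; each statement's English description precedes it below -/
import Mathlib

section
/- If λ = a + ib is a non-real complex number with a ≠ -1 and ξ is a nonzero real number, then Im ∫_ℝ w(v)/(viξ + 1 + λ) dv = -∫_ℝ (vξ + b) w(v)/((1+a)^2 + (vξ+b)^2) dv ≠ 0; consequently ω(λ,ξ) := 1 - ∫_ℝ w(v)/(viξ+1+λ) dv has no zeros with Im λ ≠ 0 in the half-planes Re λ > -1 or Re λ < -1. -/
/-!
Shifting `v` by `y = b / ξ` turns `vξ + b` into `uξ`; pairing `u` with `-u` and multiplying by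
`b = yξ`, the integrand of `2b ∫ (vξ+b) w / (c + (vξ+b)²)` becomes
`ξ² · u y (w (u - y) - w (u + y)) / (c + u²ξ²)`. The Gaussian is strictly decreasing in `|·|`,
and `(u + y)² - (u - y)² = 4uy`, so this is nonnegative, continuous and positive at `u = 1`;
hence the integral is nonzero. Taking `Im` under the integral is justified by
`|viξ + 1 + λ| ≥ |1 + a|`.
-/

open MeasureTheory Real Filter Complex

noncomputable def w (v : ℝ) : ℝ := Real.exp (-v ^ 2) / Real.sqrt Real.pi

lemma w_neg (v : ℝ) : w (-v) = w v := by
  simp only [w, neg_sq]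

lemma continuous_w : Continuous w := by
  unfold w; fun_prop

lemma integrable_w : Integrable w := by
  unfold w
  simpa only [neg_mul, one_mul] using
    (integrable_exp_neg_mul_sq one_pos).div_const (Real.sqrt Real.pi)

lemma sub_mul_exp_sub_exp_pos {p q : ℝ} (h : p ≠ q) :
    0 < (p - q) * (Real.exp p - Real.exp q) := by
  rcases h.lt_or_gt with h | h
  · exact mul_pos_of_neg_of_neg (sub_neg.2 h) (sub_neg.2 (Real.exp_lt_exp.2 h))
  · exact mul_pos (sub_pos.2 h) (sub_pos.2 (Real.exp_lt_exp.2 h))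

lemma mul_w_sub_w_pos {x y : ℝ} (h : x * y ≠ 0) : 0 < x * y * (w (x - y) - w (x + y)) := by
  have key : x * y * (w (x - y) - w (x + y)) =
      (-(x - y) ^ 2 - -(x + y) ^ 2) * (Real.exp (-(x - y) ^ 2) - Real.exp (-(x + y) ^ 2)) /
        (4 * Real.sqrt Real.pi) := by
    simp only [w]; ring
  rw [key]
  refine div_pos (sub_mul_exp_sub_exp_pos fun h' => h ?_) (by positivity)
  linarith

lemma mul_w_sub_w_nonneg (x y : ℝ) : 0 ≤ x * y * (w (x - y) - w (x + y)) := by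
  rcases eq_or_ne (x * y) 0 with h | h
  · simp [h]
  · exact (mul_w_sub_w_pos h).le

lemma abs_div_add_sq_le {c : ℝ} (hc : 0 < c) (t : ℝ) :
    |t| / (c + t ^ 2) ≤ 1 / (2 * Real.sqrt c) := by
  rw [div_le_div_iff₀ (by positivity) (by positivity)]
  nlinarith [two_mul_le_add_sq (Real.sqrt c) |t|, Real.sq_sqrt hc.le, sq_abs t]

lemma integrable_mul_w_div {c : ℝ} (hc : 0 < c) (ξ b : ℝ) :
    Integrable fun v => (v * ξ + b) * w v / (c + (v * ξ + b) ^ 2) := by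
  have hbdd := integrable_w.bdd_mul (c := 1 / (2 * Real.sqrt c))
    (f := fun v => (v * ξ + b) / (c + (v * ξ + b) ^ 2))
    (Continuous.aestronglyMeasurable (by fun_prop (disch := intro; positivity)))
    (ae_of_all _ fun v => by
      simpa [abs_div, abs_of_pos (by positivity : 0 < c + (v * ξ + b) ^ 2)]
        using abs_div_add_sq_le hc (v * ξ + b))
  simpa only [div_mul_eq_mul_div] using hbdd

theorem integral_mul_w_div_ne_zero {ξ b c : ℝ} (hξ : ξ ≠ 0) (hb : b ≠ 0) (hc : 0 < c) :
    ∫ v, (v * ξ + b) * w v / (c + (v * ξ + b) ^ 2) ≠ 0 := by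
  obtain ⟨y, rfl⟩ : ∃ y, y * ξ = b := ⟨b / ξ, div_mul_cancel₀ b hξ⟩
  set g : ℝ → ℝ := fun u => u * ξ * w (u - y) / (c + (u * ξ) ^ 2)
  have hshift : ∀ u, (u - y) * ξ + y * ξ = u * ξ := fun u => by ring
  have hg : Integrable g := by
    simpa only [hshift] using (integrable_mul_w_div hc ξ (y * ξ)).comp_sub_right y
  have hfg : ∫ v, (v * ξ + y * ξ) * w v / (c + (v * ξ + y * ξ) ^ 2) = ∫ u, g u := by
    rw [← integral_sub_right_eq_self _ y]
    simp only [hshift, g]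
  have hsym : y * ξ * (2 * ∫ u, g u) = ∫ u, y * ξ * (g u + g (-u)) := by
    rw [integral_const_mul, integral_add hg hg.comp_neg, integral_neg_eq_self]
    ring
  have hpair : ∀ u, y * ξ * (g u + g (-u)) =
      ξ ^ 2 * (u * y * (w (u - y) - w (u + y))) / (c + (u * ξ) ^ 2) := by
    intro u
    simp only [g, show -u - y = -(u + y) by ring, w_neg, neg_mul, neg_sq]
    ring
  have hpos : 0 < ∫ u, y * ξ * (g u + g (-u)) := by
    have hint : Integrable fun u => y * ξ * (g u + g (-u)) := (hg.add hg.comp_neg).const_mul _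
    simp only [hpair] at hint ⊢
    refine integral_pos_of_integrable_nonneg_nonzero (x := 1) ?_ hint ?_ ?_
    · have := continuous_w
      fun_prop (disch := intro; positivity)
    · intro u
      have := mul_w_sub_w_nonneg u y
      positivity
    · have := mul_w_sub_w_pos (x := 1) (y := y) (by simpa using left_ne_zero_of_mul hb)
      positivity
  rw [hfg]
  intro h
  simp [← hsym, h] at hpos

section
variable (l : ℂ) (ξ v : ℝ)

lemma denom_re : ((v : ℂ) * I * ξ + 1 + l).re = 1 + l.re := by simp

lemma denom_im : ((v : ℂ) * I * ξ + 1 + l).im = v * ξ + l.im := by simp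

lemma im_w_div : ((w v : ℂ) / (v * I * ξ + 1 + l)).im =
    -((v * ξ + l.im) * w v / ((1 + l.re) ^ 2 + (v * ξ + l.im) ^ 2)) := by
  rw [div_im, normSq_apply, denom_re, denom_im, ofReal_re, ofReal_im]
  ring

end

lemma integrable_w_div {l : ℂ} (ha : l.re ≠ -1) (ξ : ℝ) :
    Integrable fun v : ℝ => (w v : ℂ) / (v * I * ξ + 1 + l) := by
  have hre : 0 < |1 + l.re| := abs_pos.2 fun h => ha (by linarith)
  have hne : ∀ v : ℝ, (v : ℂ) * I * ξ + 1 + l ≠ 0 := fun v h => by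
    simp [← denom_re l ξ v, h] at hre
  have hbdd := integrable_w.ofReal.bdd_mul (c := 1 / |1 + l.re|)
    (f := fun v : ℝ => ((v : ℂ) * I * ξ + 1 + l)⁻¹)
    (Continuous.aestronglyMeasurable (by fun_prop (disch := exact hne)))
    (ae_of_all _ fun v => by
      rw [norm_inv, ← one_div]
      exact one_div_le_one_div_of_le hre (denom_re l ξ v ▸ abs_re_le_norm _))
  convert hbdd using 2 with v
  rw [div_eq_inv_mul]
  rfl

lemma im_integral_w_div {l : ℂ} (ha : l.re ≠ -1) (ξ : ℝ) :
    (∫ v : ℝ, (w v : ℂ) / (v * I * ξ + 1 + l)).im =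
      -∫ v : ℝ, (v * ξ + l.im) * w v / ((1 + l.re) ^ 2 + (v * ξ + l.im) ^ 2) := by
  rw [← integral_neg, ← RCLike.im_eq_complex_im, ← integral_im (integrable_w_div ha ξ)]
  simp only [RCLike.im_eq_complex_im, im_w_div]

/-- for λ = a + ib non-real with a ≠ -1 and ξ ≠ 0 real, the
imaginary part of ∫ w(v)/(viξ+1+λ) dv equals
-∫ (vξ+b)w(v)/((1+a)²+(vξ+b)²) dv, which is nonzero; hence
ω(λ,ξ) = 1 - ∫ w(v)/(viξ+1+λ) dv ≠ 0. -/
theorem stmt9 (l : ℂ) (hb : l.im ≠ 0) (ha : l.re ≠ -1) (ξ : ℝ) (hξ : ξ ≠ 0) :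
    (∫ v : ℝ, (w v : ℂ) / (v * Complex.I * ξ + 1 + l)).im =
      -∫ v : ℝ, (v * ξ + l.im) * w v / ((1 + l.re) ^ 2 + (v * ξ + l.im) ^ 2) ∧
    (∫ v : ℝ, (v * ξ + l.im) * w v / ((1 + l.re) ^ 2 + (v * ξ + l.im) ^ 2)) ≠ 0 ∧
    (1 : ℂ) - ∫ v : ℝ, (w v : ℂ) / (v * Complex.I * ξ + 1 + l) ≠ 0 := by
  have hc : 0 < (1 + l.re) ^ 2 := sq_pos_iff.2 fun h => ha (by linarith)
  have him := im_integral_w_div ha ξ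
  have hne := integral_mul_w_div_ne_zero hξ hb hc
  refine ⟨him, hne, fun h => hne ?_⟩
  simpa [him] using congrArg Complex.im h
end

section
/- The smooth function λ*: (-√π, √π) → (-1, 0] defined implicitly by ω(λ*(ξ),ξ) = 0 (with λ*(0)=0), where ω(λ,ξ) = 1 - ∫_ℝ (1+λ)w(v)/((1+λ)²+(vξ)²)dv and w(v)=e^{-v²}/√π, satisfies the singular ODE dλ*/dξ = ξ/(2λ*) + λ*/ξ + 1/ξ for ξ ≠ 0. -/
open MeasureTheory Real Filter

noncomputable def omg (l ξ : ℝ) : ℝ :=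
  1 - ∫ v : ℝ, (1 + l) * w v / ((1 + l) ^ 2 + (v * ξ) ^ 2)

/-!
For `ξ > 0` the substitution `v = (1 + λ) u / ξ` turns `ω(λ, ξ) = 0` into `G((1 + λ) / ξ) = √π ξ`,
where `G(s) = ∫ e^{-s²u²} / (1 + u²) du`. Differentiating under the integral sign gives
`G'(s) = 2 s G(s) - 2 √π`, which on the curve equals `2 √π λ`, so the chain rule yields
`2 λ (ξ λ' - 1 - λ) = ξ²`. Since `G(s) < √π / s`, the curve avoids `λ = 0` for `ξ > 0`, and we may
divide by `λ`. Negative `ξ` follows because `ω` is even in `ξ`.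
-/

noncomputable def gaussCauchy (s : ℝ) : ℝ := ∫ u : ℝ, exp (-(s * u) ^ 2) / (1 + u ^ 2)

lemma exp_neg_sq_mul_eq (s u : ℝ) : exp (-(s * u) ^ 2) = exp (-s ^ 2 * u ^ 2) := by ring_nf

lemma integrable_exp_neg_sq_const_mul {s : ℝ} (hs : s ≠ 0) :
    Integrable fun u : ℝ => exp (-(s * u) ^ 2) := by
  simp_rw [exp_neg_sq_mul_eq]
  exact integrable_exp_neg_mul_sq (by positivity)

lemma integral_exp_neg_sq_const_mul {s : ℝ} (hs : 0 < s) :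
    ∫ u : ℝ, exp (-(s * u) ^ 2) = √π / s := by
  simp_rw [exp_neg_sq_mul_eq, integral_gaussian]
  rw [sqrt_div' _ (by positivity), sqrt_sq hs.le]

lemma continuous_exp_neg_sq_const_mul_div (s : ℝ) :
    Continuous fun u : ℝ => exp (-(s * u) ^ 2) / (1 + u ^ 2) :=
  .div (by fun_prop) (by fun_prop) fun u => by positivity

lemma integrable_gaussCauchy {s : ℝ} (hs : s ≠ 0) :
    Integrable fun u : ℝ => exp (-(s * u) ^ 2) / (1 + u ^ 2) := by
  refine (integrable_exp_neg_sq_const_mul hs).mono'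
    (continuous_exp_neg_sq_const_mul_div s).aestronglyMeasurable (.of_forall fun u => ?_)
  rw [norm_of_nonneg (by positivity)]
  exact div_le_self (exp_pos _).le (by nlinarith [sq_nonneg u])

lemma exp_neg_sq_const_mul_sub_div (s u : ℝ) :
    exp (-(s * u) ^ 2) - exp (-(s * u) ^ 2) / (1 + u ^ 2) =
      u ^ 2 * exp (-(s * u) ^ 2) / (1 + u ^ 2) := by
  field_simp
  ring

lemma integrable_sq_mul_exp_neg_sq_const_mul_div {s : ℝ} (hs : s ≠ 0) :
    Integrable fun u : ℝ => u ^ 2 * exp (-(s * u) ^ 2) / (1 + u ^ 2) := by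
  simpa only [Pi.sub_def, exp_neg_sq_const_mul_sub_div] using
    (integrable_exp_neg_sq_const_mul hs).sub (integrable_gaussCauchy hs)

lemma sqrt_pi_div_sub_gaussCauchy {s : ℝ} (hs : 0 < s) :
    √π / s - gaussCauchy s = ∫ u : ℝ, u ^ 2 * exp (-(s * u) ^ 2) / (1 + u ^ 2) := by
  rw [gaussCauchy, ← integral_exp_neg_sq_const_mul hs,
    ← integral_sub (integrable_exp_neg_sq_const_mul hs.ne') (integrable_gaussCauchy hs.ne')]
  simp only [exp_neg_sq_const_mul_sub_div]

lemma gaussCauchy_lt {s : ℝ} (hs : 0 < s) : gaussCauchy s < √π / s := by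
  have hpos : 0 < ∫ u : ℝ, u ^ 2 * exp (-(s * u) ^ 2) / (1 + u ^ 2) :=
    integral_pos_of_integrable_nonneg_nonzero (x := 1)
      (Continuous.div (by fun_prop) (by fun_prop) fun u => by positivity)
      (integrable_sq_mul_exp_neg_sq_const_mul_div hs.ne') (fun u => by positivity) (by positivity)
  linarith [sqrt_pi_div_sub_gaussCauchy hs]

lemma hasDerivAt_gaussCauchy {s : ℝ} (hs : 0 < s) :
    HasDerivAt gaussCauchy (2 * s * gaussCauchy s - 2 * √π) s := by
  have hball : Metric.ball s (s / 2) ∈ nhds s := Metric.ball_mem_nhds s (by positivity)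
  have hF' : ∀ t u : ℝ, HasDerivAt (fun t => exp (-(t * u) ^ 2) / (1 + u ^ 2))
      (-2 * t * (u ^ 2 * exp (-(t * u) ^ 2) / (1 + u ^ 2))) t := fun t u => by
    refine (((hasDerivAt_mul_const u).fun_pow 2).fun_neg.exp.div_const _).congr_deriv ?_
    push_cast
    ring
  have hbound : ∀ u, ∀ t ∈ Metric.ball s (s / 2),
      ‖-2 * t * (u ^ 2 * exp (-(t * u) ^ 2) / (1 + u ^ 2))‖ ≤ 3 * s * exp (-(s / 2 * u) ^ 2) := by
    intro u t ht
    rw [Metric.mem_ball, Real.dist_eq, abs_lt] at ht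
    have hfrac : u ^ 2 / (1 + u ^ 2) ≤ 1 := div_le_one_of_le₀ (by linarith) (by positivity)
    have hexp : exp (-(t * u) ^ 2) ≤ exp (-(s / 2 * u) ^ 2) :=
      exp_le_exp.2 (by nlinarith [sq_nonneg u, mul_nonneg (mul_nonneg (by linarith : 0 ≤ t - s / 2)
        (by linarith : 0 ≤ t + s / 2)) (sq_nonneg u)])
    have hx : 0 ≤ u ^ 2 / (1 + u ^ 2) * exp (-(t * u) ^ 2) := by positivity
    rw [mul_div_right_comm, norm_of_nonpos (by nlinarith)]
    calc -(-2 * t * (u ^ 2 / (1 + u ^ 2) * exp (-(t * u) ^ 2)))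
        ≤ 2 * t * (1 * exp (-(s / 2 * u) ^ 2)) := by
          rw [neg_mul, neg_mul, neg_neg]; gcongr; linarith
      _ ≤ 3 * s * exp (-(s / 2 * u) ^ 2) := by nlinarith [exp_pos (-(s / 2 * u) ^ 2)]
  obtain ⟨-, hderiv⟩ := hasDerivAt_integral_of_dominated_loc_of_deriv_le
    (F := fun t u => exp (-(t * u) ^ 2) / (1 + u ^ 2)) hball
    (.of_forall fun t => (continuous_exp_neg_sq_const_mul_div t).aestronglyMeasurable)
    (integrable_gaussCauchy hs.ne')
    ((integrable_sq_mul_exp_neg_sq_const_mul_div hs.ne').const_mul (-2 * s)).aestronglyMeasurable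
    (.of_forall hbound) ((integrable_exp_neg_sq_const_mul (by positivity)).const_mul _)
    (.of_forall fun u t _ => hF' t u)
  refine hderiv.congr_deriv ?_
  rw [integral_const_mul, ← sqrt_pi_div_sub_gaussCauchy hs]
  field_simp
  ring

lemma integral_mul_w_div_eq_gaussCauchy {a ξ : ℝ} (ha : 0 < a) (hξ : 0 < ξ) :
    ∫ v : ℝ, a * w v / (a ^ 2 + (v * ξ) ^ 2) = gaussCauchy (a / ξ) / (√π * ξ) := by
  have hsub := Measure.integral_comp_mul_left
    (fun v : ℝ => exp (-v ^ 2) / (1 + (v * ξ / a) ^ 2)) (a / ξ)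
  have hint : ∀ v : ℝ, a * w v / (a ^ 2 + (v * ξ) ^ 2) =
      exp (-v ^ 2) / (1 + (v * ξ / a) ^ 2) / (a * √π) := fun v => by
    rw [w]
    field_simp
  have hG : ∀ u : ℝ, exp (-(a / ξ * u) ^ 2) / (1 + (a / ξ * u * ξ / a) ^ 2) =
      exp (-(a / ξ * u) ^ 2) / (1 + u ^ 2) := fun u => by
    field_simp
  simp only [hG] at hsub
  rw [gaussCauchy, hsub, abs_of_pos (by positivity), smul_eq_mul]
  simp only [hint]
  rw [integral_div]
  generalize ∫ v : ℝ, exp (-v ^ 2) / (1 + (v * ξ / a) ^ 2) = I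
  field_simp

lemma omg_eq_one_sub_gaussCauchy {l ξ : ℝ} (hl : -1 < l) (hξ : 0 < ξ) :
    omg l ξ = 1 - gaussCauchy ((1 + l) / ξ) / (√π * ξ) := by
  rw [omg, integral_mul_w_div_eq_gaussCauchy (by linarith) hξ]

lemma gaussCauchy_eq_of_omg_eq_zero {l ξ : ℝ} (hl : -1 < l) (hξ : 0 < ξ) (h : omg l ξ = 0) :
    gaussCauchy ((1 + l) / ξ) = √π * ξ := by
  rw [omg_eq_one_sub_gaussCauchy hl hξ, sub_eq_zero, eq_comm,
    div_eq_one_iff_eq (by positivity)] at h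
  exact h

lemma omg_zero_pos {ξ : ℝ} (hξ : 0 < ξ) : 0 < omg 0 ξ := by
  have hlt := gaussCauchy_lt (one_div_pos.2 hξ)
  rw [omg_eq_one_sub_gaussCauchy (by norm_num) hξ, add_zero, sub_pos,
    div_lt_one (by positivity)]
  rwa [div_div_eq_mul_div, div_one] at hlt

lemma omg_neg (l ξ : ℝ) : omg l (-ξ) = omg l ξ := by
  simp only [omg, mul_neg, neg_sq]

lemma HasDerivAt.eq_of_omg_eq_zero_of_pos {f : ℝ → ℝ} {f' ξ : ℝ} (hf : HasDerivAt f f' ξ)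
    (hξ : 0 < ξ) (hf1 : -1 < f ξ) (hzero : ∀ᶠ x in nhds ξ, omg (f x) x = 0) :
    f' = ξ / (2 * f ξ) + f ξ / ξ + 1 / ξ := by
  have hG : (fun x => √π * x) =ᶠ[nhds ξ] fun x => gaussCauchy ((1 + f x) / x) := by
    filter_upwards [hzero, continuousAt_const.eventually_lt hf.continuousAt hf1,
      lt_mem_nhds hξ] with x hx hx1 hx0
    exact (gaussCauchy_eq_of_omg_eq_zero hx1 hx0 hx).symm
  have hGξ := hG.eq_of_nhds
  have hfξ : f ξ ≠ 0 := fun h => (omg_zero_pos hξ).ne' (h ▸ hzero.self_of_nhds)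
  have hs : HasDerivAt (fun x => (1 + f x) / x) ((f' * ξ - (1 + f ξ)) / ξ ^ 2) ξ := by
    simpa using ((hasDerivAt_const ξ 1).fun_add hf).fun_div (hasDerivAt_id ξ) hξ.ne'
  have hcomp := HasDerivAt.comp (h := fun x => (1 + f x) / x) ξ
    (hasDerivAt_gaussCauchy (div_pos (neg_lt_iff_pos_add'.1 hf1) hξ)) hs
  have huniq := (hcomp.congr_of_eventuallyEq hG).unique
    ((hasDerivAt_id ξ).const_mul √π)
  rw [← hGξ] at huniq
  have hode : 2 * f ξ * (ξ * f' - (1 + f ξ)) = ξ ^ 2 := by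
    field_simp at huniq
    linear_combination huniq
  field_simp
  linear_combination hode

lemma HasDerivAt.eq_of_omg_eq_zero {f : ℝ → ℝ} {f' ξ : ℝ} (hf : HasDerivAt f f' ξ)
    (hξ : ξ ≠ 0) (hf1 : -1 < f ξ) (hzero : ∀ᶠ x in nhds ξ, omg (f x) x = 0) :
    f' = ξ / (2 * f ξ) + f ξ / ξ + 1 / ξ := by
  rcases hξ.lt_or_gt with hneg | hpos
  · have hf_neg : HasDerivAt (fun x => f (-x)) (-f') (-ξ) :=
      (hf.comp_of_eq (-ξ) (hasDerivAt_neg (-ξ)) (neg_neg ξ).symm).congr_deriv (mul_neg_one f')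
    have hzero_neg : ∀ᶠ x in nhds (-ξ), omg (f (-x)) x = 0 := by
      have := (continuous_neg.tendsto' (-ξ) ξ (neg_neg ξ)).eventually hzero
      simpa only [omg_neg] using this
    have := hf_neg.eq_of_omg_eq_zero_of_pos (neg_pos.2 hneg) (by rwa [neg_neg]) hzero_neg
    rw [neg_neg] at this
    linear_combination -this
  · exact hf.eq_of_omg_eq_zero_of_pos hpos hf1 hzero

theorem stmt16_general (lstar : ℝ → ℝ)
    (hdiff : DifferentiableOn ℝ lstar
      (Set.Ioo (-Real.sqrt Real.pi) (Real.sqrt Real.pi)))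
    (hrange : ∀ ξ ∈ Set.Ioo (-Real.sqrt Real.pi) (Real.sqrt Real.pi),
      lstar ξ ∈ Set.Ioc (-1 : ℝ) 0)
    (hzero : ∀ ξ ∈ Set.Ioo (-Real.sqrt Real.pi) (Real.sqrt Real.pi),
      omg (lstar ξ) ξ = 0) :
    ∀ ξ ∈ Set.Ioo (-Real.sqrt Real.pi) (Real.sqrt Real.pi), ξ ≠ 0 →
      deriv lstar ξ = ξ / (2 * lstar ξ) + lstar ξ / ξ + 1 / ξ := by
  intro ξ hξ hξ0
  have hnhds := isOpen_Ioo.mem_nhds hξ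
  exact ((hdiff ξ hξ).differentiableAt hnhds).hasDerivAt.eq_of_omg_eq_zero hξ0
    (hrange ξ hξ).1 (eventually_of_mem hnhds hzero)

/-- the smooth function λ* : (-√π,√π) → (-1,0] defined
implicitly by ω(λ*(ξ),ξ) = 0 (with λ*(0) = 0) satisfies the singular ODE
dλ*/dξ = ξ/(2λ*) + λ*/ξ + 1/ξ for ξ ≠ 0. -/
theorem stmt16 (lstar : ℝ → ℝ)
    (hdiff : DifferentiableOn ℝ lstar
      (Set.Ioo (-Real.sqrt Real.pi) (Real.sqrt Real.pi)))
    (hrange : ∀ ξ ∈ Set.Ioo (-Real.sqrt Real.pi) (Real.sqrt Real.pi),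
      lstar ξ ∈ Set.Ioc (-1 : ℝ) 0)
    (hzero : ∀ ξ ∈ Set.Ioo (-Real.sqrt Real.pi) (Real.sqrt Real.pi),
      omg (lstar ξ) ξ = 0)
    (h0 : lstar 0 = 0) :
    ∀ ξ ∈ Set.Ioo (-Real.sqrt Real.pi) (Real.sqrt Real.pi), ξ ≠ 0 →
      deriv lstar ξ = ξ / (2 * lstar ξ) + lstar ξ / ξ + 1 / ξ :=
  stmt16_general lstar hdiff hrange hzero
end
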